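/- Let m be a nonnegative integer. Then (-1)^{m+1} · 2 · (1 - 3^{-2m-1}) · λ(2m+2) = π^{2m+2}/(3^{2m+1}·(2m+1)!) + 4·Σ_{k=0}^{m} (-1)^{k+1} · π^{2m-2k}/(3^{2m-2k}·(2m-2k)!) · λ(2k+2). -/

import Mathlib

/-!
By Euler's formula for `ζ(2j)`, `λ(2j) = (1 - 2^{-2j}) ζ(2j) = (-1)^{j+1} π^{2j} c_j` with
`c_j = (4^j - 1) B_{2j} / (2 (2j)!)`, and
`∑ 4 c_j X^{2j} = T(X) := X tanh(X/2) = 2 B(2X) - 2 B(X) + X`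
for the Bernoulli generating function `B(X) = X / (e^X - 1)`. The identity
`3 T(X) - T(3X) = 6 X sinh X - 2 T(3X) cosh X` of power series, read at `X^{2m+2}`, is a
recurrence for the `c_j`; multiplied by `π^{2m+2} / 3^{2m+1}` it becomes the recurrence for `λ`.
-/

open Real Finset

/-- The Dirichlet lambda function at a natural-number argument `j`:
`λ(j) = ∑_{n=0}^∞ 1/(2n+1)^j`. -/
noncomputable def dirichletLambda (j : ℕ) : ℝ := ∑' n : ℕ, 1 / (2 * (n : ℝ) + 1) ^ j

open PowerSeries Nat

theorem neg_one_pow_succ_mul_neg_one_pow {R : Type*} [Monoid R] [HasDistribNeg R] (n : ℕ) :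
    (-1 : R) ^ (n + 1) * (-1) ^ n = -1 := by
  rw [← pow_add]
  exact Odd.neg_one_pow ⟨n, by ring⟩

theorem Finset.sum_range_two_mul_add_one_of_odd {M : Type*} [AddCommMonoid M] (f : ℕ → M)
    (hf : ∀ i, f (2 * i + 1) = 0) (n : ℕ) :
    ∑ i ∈ range (2 * n + 1), f i = ∑ i ∈ range (n + 1), f (2 * i) := by
  induction n with
  | zero => simp
  | succ n ih =>
    rw [show 2 * (n + 1) + 1 = 2 * n + 1 + 1 + 1 by ring, sum_range_succ, sum_range_succ, ih, hf,
      sum_range_succ _ (n + 1), add_zero]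
    rfl

theorem hasSum_one_div_two_mul_add_one_pow {s : ℕ} {z : ℝ}
    (h : HasSum (fun n : ℕ => 1 / (n : ℝ) ^ s) z) :
    HasSum (fun n : ℕ => 1 / (2 * (n : ℝ) + 1) ^ s) ((1 - (2 ^ s)⁻¹) * z) := by
  have heven : HasSum (fun n : ℕ => 1 / ((2 * n : ℕ) : ℝ) ^ s) ((2 ^ s)⁻¹ * z) := by
    refine (h.mul_left (2 ^ s)⁻¹).congr_fun fun n => ?_
    push_cast
    rw [mul_pow, one_div, one_div, mul_inv]
  have hodd : Summable fun n : ℕ => 1 / ((2 * n + 1 : ℕ) : ℝ) ^ s :=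
    h.summable.comp_injective (i := fun n => 2 * n + 1) fun a b hab => by simpa using hab
  have hsplit := (HasSum.even_add_odd (f := fun n : ℕ => 1 / (n : ℝ) ^ s) heven
    hodd.hasSum).unique h
  rw [show (1 - (2 ^ s)⁻¹) * z = ∑' n : ℕ, 1 / ((2 * n + 1 : ℕ) : ℝ) ^ s by
    linear_combination -hsplit]
  exact_mod_cast hodd.hasSum

namespace PowerSeries

variable {A : Type*} [CommRing A] [Algebra ℚ A]

theorem exp_sub_one_ne_zero [Nontrivial A] : exp A - 1 ≠ 0 := fun h => by
  simpa using congrArg (coeff 1) h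

theorem exp_mul_rescale_neg_one_exp : exp A * rescale (-1) (exp A) = 1 := by
  simpa using exp_mul_exp_eq_exp_add (1 : A) (-1)

end PowerSeries

namespace DirichletLambda

def lambdaCoeff (j : ℕ) : ℚ := (4 ^ j - 1) * bernoulli (2 * j) / (2 * (2 * j)!)

theorem lambdaCoeff_zero : lambdaCoeff 0 = 0 := by simp [lambdaCoeff]

theorem dirichletLambda_two_mul_add_two (k : ℕ) :
    dirichletLambda (2 * k + 2) = (-1) ^ k * π ^ (2 * k + 2) * lambdaCoeff (k + 1) := by
  rw [dirichletLambda, show 2 * k + 2 = 2 * (k + 1) by ring,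
    (hasSum_one_div_two_mul_add_one_pow (hasSum_zeta_nat (by omega : k + 1 ≠ 0))).tsum_eq,
    lambdaCoeff, show 2 * (k + 1) - 1 = 2 * k + 1 by omega,
    show (4 : ℚ) ^ (k + 1) = 2 ^ (2 * (k + 1)) by rw [pow_mul]; norm_num]
  push_cast
  field_simp
  ring

/-- `X tanh (X / 2)`, written through `bernoulliPowerSeries ℚ = X / (exp X - 1)`. -/
noncomputable def xTanhHalf : ℚ⟦X⟧ :=
  2 * rescale 2 (bernoulliPowerSeries ℚ) - 2 * bernoulliPowerSeries ℚ + X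

theorem xTanhHalf_mul_exp_add_one : xTanhHalf * (exp ℚ + 1) = X * (exp ℚ - 1) := by
  have hB := bernoulliPowerSeries_mul_exp_sub_one ℚ
  have hB2 : rescale 2 (bernoulliPowerSeries ℚ) * (exp ℚ ^ 2 - 1) = 2 * X := by
    simpa [exp_pow_eq_rescale_exp, rescale_X, ← map_ofNat C] using congrArg (rescale 2) hB
  refine mul_left_cancel₀ (exp_sub_one_ne_zero (A := ℚ)) ?_
  rw [xTanhHalf]
  linear_combination 2 * hB2 - 2 * (exp ℚ + 1) * hB

theorem rescale_three_xTanhHalf_mul :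
    rescale 3 xTanhHalf * (exp ℚ ^ 3 + 1) = 3 * X * (exp ℚ ^ 3 - 1) := by
  simpa [exp_pow_eq_rescale_exp, rescale_X, ← map_ofNat C, mul_assoc]
    using congrArg (rescale 3) xTanhHalf_mul_exp_add_one

/-- With `xTanhHalf = X (u - 1) / (u + 1)` for `u = exp X`, this comes down to
`u ^ 3 + 1 = (u + 1) (u ^ 2 - u + 1)`. -/
theorem xTanhHalf_triplication :
    3 * xTanhHalf - rescale 3 xTanhHalf =
      3 * X * (exp ℚ - rescale (-1) (exp ℚ)) -
        rescale 3 xTanhHalf * (exp ℚ + rescale (-1) (exp ℚ)) := by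
  have hne : (exp ℚ + 1) * (exp ℚ ^ 3 + 1) * exp ℚ ≠ 0 := fun h => by
    simpa using congrArg constantCoeff h
  refine mul_left_cancel₀ hne ?_
  linear_combination (3 * exp ℚ * (exp ℚ ^ 3 + 1)) * xTanhHalf_mul_exp_add_one
    + (exp ℚ * (exp ℚ + 1) * (exp ℚ + rescale (-1) (exp ℚ) - 1)) *
        rescale_three_xTanhHalf_mul
    + (6 * X * exp ℚ * (exp ℚ ^ 3 + exp ℚ ^ 2)) * exp_mul_rescale_neg_one_exp (A := ℚ)

theorem coeff_xTanhHalf (n : ℕ) :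
    coeff n xTanhHalf = 2 * (2 ^ n - 1) * bernoulli n / n ! + if n = 1 then 1 else 0 := by
  simp only [xTanhHalf, ← map_ofNat C, map_add, map_sub, coeff_C_mul, coeff_rescale,
    bernoulliPowerSeries, coeff_mk, Algebra.algebraMap_self_apply, coeff_X]
  ring

theorem coeff_xTanhHalf_two_mul (j : ℕ) : coeff (2 * j) xTanhHalf = 4 * lambdaCoeff j := by
  rw [coeff_xTanhHalf, if_neg (by omega), lambdaCoeff, pow_mul]
  field_simp
  ring

theorem coeff_xTanhHalf_two_mul_add_one (k : ℕ) : coeff (2 * k + 1) xTanhHalf = 0 := by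
  rcases k.eq_zero_or_pos with rfl | hk
  · norm_num [coeff_xTanhHalf]
  · rw [coeff_xTanhHalf, bernoulli_eq_bernoulli'_of_ne_one (by omega),
      bernoulli'_eq_zero_of_odd (odd_two_mul_add_one k) (by omega), if_neg (by omega)]
    simp

theorem coeff_exp_add_exp_neg (n : ℕ) :
    coeff n (exp ℚ + rescale (-1) (exp ℚ)) = (1 + (-1) ^ n) / n ! := by
  simp only [map_add, coeff_rescale, coeff_exp, Algebra.algebraMap_self_apply]
  ring

theorem coeff_exp_sub_exp_neg (n : ℕ) :
    coeff n (exp ℚ - rescale (-1) (exp ℚ)) = (1 - (-1) ^ n) / n ! := by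
  simp only [map_sub, coeff_rescale, coeff_exp, Algebra.algebraMap_self_apply]
  ring

theorem coeff_rescale_three_xTanhHalf_mul_exp_add_exp_neg (m : ℕ) :
    coeff (2 * m + 2) (rescale 3 xTanhHalf * (exp ℚ + rescale (-1) (exp ℚ))) =
      24 * ∑ k ∈ range (m + 1), 3 ^ (2 * k + 1) * lambdaCoeff (k + 1) / (2 * m - 2 * k)! := by
  rw [show 2 * m + 2 = 2 * (m + 1) by ring, coeff_mul, Nat.sum_antidiagonal_eq_sum_range_succ_mk,
    Finset.sum_range_two_mul_add_one_of_odd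
      (fun i => coeff i (rescale 3 xTanhHalf) *
        coeff (2 * (m + 1) - i) (exp ℚ + rescale (-1) (exp ℚ)))
      (fun i => by simp [coeff_rescale, coeff_xTanhHalf_two_mul_add_one]) (m + 1),
    sum_range_succ', mul_sum]
  simp only [coeff_rescale, coeff_xTanhHalf_two_mul, coeff_exp_add_exp_neg]
  simp only [lambdaCoeff_zero, mul_zero, zero_mul, add_zero]
  refine sum_congr rfl fun k hk => ?_
  have hk : 2 * (m + 1) - 2 * (k + 1) = 2 * m - 2 * k := by omega
  rw [hk, Even.neg_one_pow ⟨m - k, by omega⟩]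
  ring

theorem lambdaCoeff_recurrence (m : ℕ) :
    2 * (1 - 3 ^ (2 * m + 1)) * lambdaCoeff (m + 1) =
      1 / (2 * m + 1)! -
        4 * ∑ k ∈ range (m + 1), 3 ^ (2 * k + 1) * lambdaCoeff (k + 1) / (2 * m - 2 * k)! := by
  have h := congrArg (coeff (2 * m + 2)) xTanhHalf_triplication
  rw [map_sub, map_sub, coeff_rescale_three_xTanhHalf_mul_exp_add_exp_neg, ← map_ofNat C 3,
    mul_assoc, coeff_C_mul, coeff_C_mul, coeff_succ_X_mul, coeff_exp_sub_exp_neg, coeff_rescale,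
    show 2 * m + 2 = 2 * (m + 1) by ring, coeff_xTanhHalf_two_mul,
    (odd_two_mul_add_one m).neg_one_pow] at h
  linear_combination h / 6

theorem neg_one_pow_succ_mul_div_mul_dirichletLambda {m k : ℕ} (hk : k ≤ m) :
    (-1 : ℝ) ^ (k + 1) * (π ^ (2 * m - 2 * k) / (3 ^ (2 * m - 2 * k) * (2 * m - 2 * k)!)) *
        dirichletLambda (2 * k + 2) =
      -(π ^ (2 * m + 2) / 3 ^ (2 * m + 1)) *
        (3 ^ (2 * k + 1) * lambdaCoeff (k + 1) / (2 * m - 2 * k)!) := by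
  obtain ⟨d, rfl⟩ := Nat.exists_eq_add_of_le hk
  rw [dirichletLambda_two_mul_add_two, show 2 * (k + d) - 2 * k = 2 * d by omega]
  calc _ = (-1) ^ (k + 1) * (-1) ^ k *
        (π ^ (2 * d) * π ^ (2 * k + 2) * lambdaCoeff (k + 1) / (3 ^ (2 * d) * (2 * d)!)) := by
        ring
    _ = _ := by
        rw [neg_one_pow_succ_mul_neg_one_pow]
        field_simp
        ring

end DirichletLambda

open DirichletLambda

theorem lambda_recurrence_third (m : ℕ) :
    (-1 : ℝ) ^ (m + 1) * 2 * (1 - (3 : ℝ) ^ (-(2 * (m : ℤ)) - 1)) * dirichletLambda (2 * m + 2) =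
      π ^ (2 * m + 2) / (3 ^ (2 * m + 1) * (Nat.factorial (2 * m + 1))) +
        4 * ∑ k ∈ Finset.range (m + 1),
          (-1 : ℝ) ^ (k + 1) *
            (π ^ (2 * m - 2 * k) / (3 ^ (2 * m - 2 * k) * (Nat.factorial (2 * m - 2 * k)))) *
              dirichletLambda (2 * k + 2) := by
  have hzpow : (3 : ℝ) ^ (-(2 * (m : ℤ)) - 1) = ((3 : ℝ) ^ (2 * m + 1))⁻¹ := by
    rw [← zpow_natCast, ← zpow_neg]
    push_cast
    ring_nf
  have hrec := congrArg (Rat.cast : ℚ → ℝ) (lambdaCoeff_recurrence m)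
  push_cast at hrec
  rw [hzpow, dirichletLambda_two_mul_add_two, sum_congr rfl fun k hk =>
      neg_one_pow_succ_mul_div_mul_dirichletLambda (Nat.lt_succ_iff.mp (mem_range.mp hk)),
    ← mul_sum]
  calc _ = (-1) ^ (m + 1) * (-1) ^ m *
        (2 * (1 - (3 ^ (2 * m + 1))⁻¹) * π ^ (2 * m + 2) * lambdaCoeff (m + 1)) := by
        ring
    _ = π ^ (2 * m + 2) / 3 ^ (2 * m + 1) * (2 * (1 - 3 ^ (2 * m + 1)) * lambdaCoeff (m + 1)) := by
        rw [neg_one_pow_succ_mul_neg_one_pow]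
        field_simp
        ring
    _ = _ := by
        rw [hrec]
        ring
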